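/- Fix λ, ρ > 0 and for integers k ≥ 1 define p_k := (1 − exp(−(ρ/2)·k^{−1/3}))·(1 − exp(−(λ/2)·k^{−1/3}))·k^{−1/4}. Then for all sufficiently large k: (i) p_k ≥ (ρλ/36)·k^{−11/12}, and (ii) if X is a Binomial(k, p_k) random variable, then P(X < k^{1/24}) ≤ exp(−k^{1/24}). -/
import Mathlib


open MeasureTheory

/-- The success probability
`p_k = (1 − e^{−(ρ/2) k^{−1/3}}) (1 − e^{−(λ/2) k^{−1/3}}) k^{−1/4}`. -/
noncomputable def pSucc (lam rho : ℝ) (k : ℕ) : ℝ :=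
  (1 - Real.exp (-(rho / 2) * (k : ℝ) ^ (-(1 : ℝ) / 3))) *
    (1 - Real.exp (-(lam / 2) * (k : ℝ) ^ (-(1 : ℝ) / 3))) * (k : ℝ) ^ (-(1 : ℝ) / 4)

open Filter

set_option maxHeartbeats 1000000

lemma half_le_one_sub_exp (t : ℝ) (h0 : 0 ≤ t) (h1 : t ≤ 1) : t / 2 ≤ 1 - Real.exp (-t) := by
  have h := Real.add_one_le_exp t
  have he : Real.exp (-t) * Real.exp t = 1 := by rw [← Real.exp_add]; simp
  nlinarith [Real.exp_pos (-t), Real.exp_pos t]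

/-- For all large `k`: (i) `p_k ≥ (ρλ/36) k^{−11/12}`; (ii) if `X ∼ Binomial(k, p_k)`
then `P(X < k^{1/24}) ≤ exp(−k^{1/24})`. -/
theorem binomial_lit_neighbors (lam rho : ℝ) (hlam : 0 < lam) (hrho : 0 < rho) :
    ∃ K : ℕ, ∀ k : ℕ, K ≤ k →
      (rho * lam / 36 * (k : ℝ) ^ (-(11 : ℝ) / 12) ≤ pSucc lam rho k) ∧
      ∀ (Ω : Type) (mΩ : MeasurableSpace Ω) (P : Measure Ω), IsProbabilityMeasure P →
        ∀ X : Ω → ℕ,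
        (∀ i : ℕ, P {ω | X ω = i} =
          ENNReal.ofReal ((k.choose i : ℝ) * pSucc lam rho k ^ i *
            (1 - pSucc lam rho k) ^ (k - i))) →
        P {ω | (X ω : ℝ) < (k : ℝ) ^ ((1 : ℝ) / 24)} ≤
          ENNReal.ofReal (Real.exp (-(k : ℝ) ^ ((1 : ℝ) / 24))) := by
  set c : ℝ := rho * lam / 36 with hc
  have hcpos : 0 < c := by positivity
  -- tendsto of k ↦ (k:ℝ)^(-1/3) to 0
  have hT3 : Tendsto (fun k : ℕ => (k : ℝ) ^ (-(1:ℝ)/3)) atTop (nhds 0) := by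
    have := (tendsto_rpow_neg_atTop (show (0:ℝ) < 1/3 by norm_num)).comp
      (tendsto_natCast_atTop_atTop (R := ℝ))
    convert this using 2 with k
    · norm_num
  have hE2 : ∀ᶠ k : ℕ in atTop, (rho / 2) * (k : ℝ) ^ (-(1:ℝ)/3) ≤ 1 := by
    filter_upwards [hT3.eventually_lt_const (show (0:ℝ) < 2/rho by positivity)] with k hk
    have h0 : 0 ≤ (k : ℝ) ^ (-(1:ℝ)/3) := Real.rpow_nonneg (Nat.cast_nonneg k) _
    calc (rho/2) * (k : ℝ) ^ (-(1:ℝ)/3) ≤ (rho/2) * (2/rho) := by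
          apply mul_le_mul_of_nonneg_left hk.le (by positivity)
      _ = 1 := by field_simp
  have hE3 : ∀ᶠ k : ℕ in atTop, (lam / 2) * (k : ℝ) ^ (-(1:ℝ)/3) ≤ 1 := by
    filter_upwards [hT3.eventually_lt_const (show (0:ℝ) < 2/lam by positivity)] with k hk
    have h0 : 0 ≤ (k : ℝ) ^ (-(1:ℝ)/3) := Real.rpow_nonneg (Nat.cast_nonneg k) _
    calc (lam/2) * (k : ℝ) ^ (-(1:ℝ)/3) ≤ (lam/2) * (2/lam) := by
          apply mul_le_mul_of_nonneg_left hk.le (by positivity)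
      _ = 1 := by field_simp
  -- E5 : 3 + 2 log k ≤ (c/2) k^(1/24)
  have hreal : ∀ᶠ x : ℝ in atTop, 3 + 48 * Real.log x ≤ (c/2) * x := by
    have hlo := Real.isLittleO_log_id_atTop.def (show (0:ℝ) < c/192 by positivity)
    filter_upwards [hlo, eventually_ge_atTop (12/c), eventually_ge_atTop (0:ℝ)] with x h1 h2 h3
    have hlx : Real.log x ≤ c/192 * x := by
      have := h1
      simp only [Real.norm_eq_abs, id] at this
      calc Real.log x ≤ |Real.log x| := le_abs_self _
        _ ≤ c/192 * |x| := this
        _ = c/192 * x := by rw [abs_of_nonneg h3]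
    have h12 : 12 ≤ c * x := by
      have := mul_le_mul_of_nonneg_left h2 hcpos.le
      have hcc : c * (12 / c) = 12 := by field_simp
      linarith
    nlinarith [hlx, h12]
  have hTt : Tendsto (fun k : ℕ => (k : ℝ) ^ ((1:ℝ)/24)) atTop atTop :=
    (tendsto_rpow_atTop (show (0:ℝ) < 1/24 by norm_num)).comp
      (tendsto_natCast_atTop_atTop (R := ℝ))
  have hE5 : ∀ᶠ k : ℕ in atTop, 3 + 2 * Real.log k ≤ (c/2) * (k : ℝ) ^ ((1:ℝ)/24) := by
    filter_upwards [hTt.eventually hreal, eventually_ge_atTop 1] with k hk hk1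
    have hkpos : (0:ℝ) < k := by exact_mod_cast hk1
    have hlog : Real.log ((k:ℝ) ^ ((1:ℝ)/24)) = (1/24) * Real.log k :=
      Real.log_rpow hkpos _
    have hk' : 3 + 48 * Real.log ((k:ℝ) ^ ((1:ℝ)/24)) ≤ c/2 * (k:ℝ) ^ ((1:ℝ)/24) := hk
    rw [hlog] at hk'
    linarith
  -- extract K
  rw [← eventually_atTop]
  filter_upwards [hE2, hE3, hE5, eventually_ge_atTop 256] with k hk2 hk3 hk5 hk256
  have hk1 : 1 ≤ k := le_trans (by norm_num) hk256
  have hkR1 : (1:ℝ) ≤ (k:ℝ) := by exact_mod_cast hk1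
  have hkpos : (0:ℝ) < k := by linarith
  set p : ℝ := pSucc lam rho k with hpdef
  set t : ℝ := (k : ℝ) ^ ((1:ℝ)/24) with ht
  have ht1 : 1 ≤ t := Real.one_le_rpow hkR1 (by norm_num)
  have htpos : 0 < t := by linarith
  -- E4 : 4 t ≤ k
  have hE4 : 4 * t ≤ (k:ℝ) := by
    have h1 : t ≤ (k:ℝ) ^ ((1:ℝ)/2) :=
      Real.rpow_le_rpow_of_exponent_le hkR1 (by norm_num)
    have h2 : (4:ℝ) ≤ (k:ℝ) ^ ((1:ℝ)/2) := by
      have : ((256:ℝ)) ^ ((1:ℝ)/2) ≤ (k:ℝ) ^ ((1:ℝ)/2) := by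
        apply Real.rpow_le_rpow (by norm_num) (by exact_mod_cast hk256) (by norm_num)
      have h256 : ((256:ℝ)) ^ ((1:ℝ)/2) = 16 := by
        rw [show (256:ℝ) = 16^(2:ℕ) by norm_num, ← Real.rpow_natCast (16:ℝ) 2,
          ← Real.rpow_mul (by norm_num)]
        norm_num
      linarith [this, h256.symm.le]
    have h3 : (k:ℝ) ^ ((1:ℝ)/2) * (k:ℝ) ^ ((1:ℝ)/2) = (k:ℝ) := by
      rw [← Real.rpow_add hkpos]; norm_num
    calc 4 * t ≤ (k:ℝ)^((1:ℝ)/2) * (k:ℝ)^((1:ℝ)/2) := by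
          apply mul_le_mul h2 h1 (by positivity) (by positivity)
      _ = (k:ℝ) := h3
  -- part (i)
  have hr3 : 0 ≤ (k : ℝ) ^ (-(1:ℝ)/3) := Real.rpow_nonneg (Nat.cast_nonneg k) _
  have ha0 : 0 ≤ (rho / 2) * (k : ℝ) ^ (-(1:ℝ)/3) := by positivity
  have hb0 : 0 ≤ (lam / 2) * (k : ℝ) ^ (-(1:ℝ)/3) := by positivity
  have hA : (rho / 2) * (k : ℝ) ^ (-(1:ℝ)/3) / 2 ≤
      1 - Real.exp (-(rho / 2) * (k : ℝ) ^ (-(1:ℝ)/3)) := by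
    rw [neg_mul]
    exact half_le_one_sub_exp _ ha0 hk2
  have hB : (lam / 2) * (k : ℝ) ^ (-(1:ℝ)/3) / 2 ≤
      1 - Real.exp (-(lam / 2) * (k : ℝ) ^ (-(1:ℝ)/3)) := by
    rw [neg_mul]
    exact half_le_one_sub_exp _ hb0 hk3
  have hA0 : 0 ≤ 1 - Real.exp (-(rho / 2) * (k : ℝ) ^ (-(1:ℝ)/3)) := by
    refine le_trans (by positivity) hA
  have hB0 : 0 ≤ 1 - Real.exp (-(lam / 2) * (k : ℝ) ^ (-(1:ℝ)/3)) := by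
    refine le_trans (by positivity) hB
  have hA1 : 1 - Real.exp (-(rho / 2) * (k : ℝ) ^ (-(1:ℝ)/3)) ≤ 1 := by
    have := Real.exp_pos (-(rho / 2) * (k : ℝ) ^ (-(1:ℝ)/3)); linarith
  have hB1 : 1 - Real.exp (-(lam / 2) * (k : ℝ) ^ (-(1:ℝ)/3)) ≤ 1 := by
    have := Real.exp_pos (-(lam / 2) * (k : ℝ) ^ (-(1:ℝ)/3)); linarith
  have hr4 : 0 ≤ (k : ℝ) ^ (-(1:ℝ)/4) := Real.rpow_nonneg (Nat.cast_nonneg k) _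
  have hr41 : (k : ℝ) ^ (-(1:ℝ)/4) ≤ 1 :=
    Real.rpow_le_one_of_one_le_of_nonpos hkR1 (by norm_num)
  have hrpowmul : (k : ℝ) ^ (-(1:ℝ)/3) * (k : ℝ) ^ (-(1:ℝ)/3) * (k : ℝ) ^ (-(1:ℝ)/4)
      = (k : ℝ) ^ (-(11:ℝ)/12) := by
    rw [← Real.rpow_add hkpos, ← Real.rpow_add hkpos]; norm_num
  have hppos : c * (k : ℝ) ^ (-(11:ℝ)/12) ≤ p := by
    have hstep : (rho / 2) * (k : ℝ) ^ (-(1:ℝ)/3) / 2 * ((lam / 2) * (k : ℝ) ^ (-(1:ℝ)/3) / 2)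
        * (k : ℝ) ^ (-(1:ℝ)/4) ≤ p := by
      rw [hpdef, pSucc]
      apply mul_le_mul_of_nonneg_right _ hr4
      apply mul_le_mul hA hB (by positivity) hA0
    refine le_trans ?_ hstep
    have : (rho / 2) * (k : ℝ) ^ (-(1:ℝ)/3) / 2 * ((lam / 2) * (k : ℝ) ^ (-(1:ℝ)/3) / 2)
        * (k : ℝ) ^ (-(1:ℝ)/4) = rho * lam / 16 * (k : ℝ) ^ (-(11:ℝ)/12) := by
      rw [← hrpowmul]; ring
    rw [this, hc]
    apply mul_le_mul_of_nonneg_right _ (Real.rpow_nonneg (Nat.cast_nonneg k) _)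
    nlinarith
  refine ⟨hppos, ?_⟩
  -- part (ii)
  intro Ω mΩ P hP X hX
  have hp0 : 0 ≤ p := le_trans (by positivity) hppos
  have hp1 : p ≤ 1 := by
    rw [hpdef, pSucc]
    calc (1 - Real.exp (-(rho / 2) * (k : ℝ) ^ (-(1:ℝ)/3))) *
        (1 - Real.exp (-(lam / 2) * (k : ℝ) ^ (-(1:ℝ)/3))) * (k : ℝ) ^ (-(1:ℝ)/4)
        ≤ 1 * 1 * 1 := by
          apply mul_le_mul _ hr41 hr4 (by norm_num)
          apply mul_le_mul hA1 hB1 hB0 (by norm_num)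
      _ = 1 := by norm_num
  set m : ℕ := ⌈t⌉₊ with hm
  have hm1 : 1 ≤ m := Nat.one_le_ceil_iff.mpr htpos
  have hmR : (m : ℝ) ≤ 2 * t := by
    have := Nat.ceil_lt_add_one htpos.le
    linarith [this]
  have hmk : (m : ℝ) ≤ (k : ℝ) := by linarith
  have hmkn : m ≤ k := by exact_mod_cast hmk
  have hcastsub : ((k - m : ℕ) : ℝ) = (k : ℝ) - m := by
    rw [Nat.cast_sub hmkn]
  have hkm : (k : ℝ) / 2 ≤ ((k - m : ℕ) : ℝ) := by rw [hcastsub]; linarith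
  -- event decomposition
  have hevent : {ω | (X ω : ℝ) < t} = ⋃ i ∈ Finset.range m, {ω | X ω = i} := by
    ext ω
    simp only [Set.mem_setOf_eq, Set.mem_iUnion, Finset.mem_range, exists_prop]
    constructor
    · intro h
      exact ⟨X ω, Nat.lt_ceil.mpr h, rfl⟩
    · rintro ⟨i, hi, hXi⟩
      rw [hXi]
      exact Nat.lt_ceil.mp hi
  rw [hevent]
  calc P (⋃ i ∈ Finset.range m, {ω | X ω = i})
      ≤ ∑ i ∈ Finset.range m, P {ω | X ω = i} := measure_biUnion_finset_le _ _
    _ = ∑ i ∈ Finset.range m, ENNReal.ofReal ((k.choose i : ℝ) * p ^ i * (1 - p) ^ (k - i)) := by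
        refine Finset.sum_congr rfl fun i _ => hX i
    _ = ENNReal.ofReal (∑ i ∈ Finset.range m,
          (k.choose i : ℝ) * p ^ i * (1 - p) ^ (k - i)) := by
        rw [ENNReal.ofReal_sum_of_nonneg]
        intro i _
        have : 0 ≤ 1 - p := by linarith
        positivity
    _ ≤ ENNReal.ofReal (Real.exp (-t)) := by
        apply ENNReal.ofReal_le_ofReal
        have h1p0 : 0 ≤ 1 - p := by linarith
        have hterm : ∀ i ∈ Finset.range m,
            (k.choose i : ℝ) * p ^ i * (1 - p) ^ (k - i)
              ≤ (k : ℝ) ^ m * (1 - p) ^ (k - m) := by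
          intro i hi
          rw [Finset.mem_range] at hi
          have h1 : (k.choose i : ℝ) ≤ (k : ℝ) ^ i := by
            exact_mod_cast Nat.choose_le_pow k i  -- check name/order
          have h2 : p ^ i ≤ 1 := pow_le_one₀ hp0 hp1
          have h3 : (1 - p) ^ (k - i) ≤ (1 - p) ^ (k - m) :=
            pow_le_pow_of_le_one h1p0 (by linarith) (Nat.sub_le_sub_left hi.le k)
          have h4 : (k : ℝ) ^ i ≤ (k : ℝ) ^ m :=
            pow_le_pow_right₀ hkR1 hi.le
          calc (k.choose i : ℝ) * p ^ i * (1 - p) ^ (k - i)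
              ≤ (k : ℝ) ^ i * 1 * (1 - p) ^ (k - m) := by
                apply mul_le_mul (mul_le_mul h1 h2 (by positivity) (by positivity)) h3
                  (by positivity) (by positivity)
            _ ≤ (k : ℝ) ^ m * (1 - p) ^ (k - m) := by
                rw [mul_one]
                exact mul_le_mul_of_nonneg_right h4 (by positivity)
        calc ∑ i ∈ Finset.range m, (k.choose i : ℝ) * p ^ i * (1 - p) ^ (k - i)
            ≤ ∑ i ∈ Finset.range m, (k : ℝ) ^ m * (1 - p) ^ (k - m) :=
              Finset.sum_le_sum hterm
          _ = (m : ℝ) * ((k : ℝ) ^ m * (1 - p) ^ (k - m)) := by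
              rw [Finset.sum_const, Finset.card_range, nsmul_eq_mul]
          _ ≤ Real.exp (-t) := by
              -- exponential bounds
              have hmpos : (0:ℝ) < m := by exact_mod_cast hm1
              have e1 : (m : ℝ) = Real.exp (Real.log m) := (Real.exp_log hmpos).symm
              have e2 : (k : ℝ) ^ m = Real.exp (m * Real.log k) := by
                rw [← Real.log_pow, Real.exp_log (by positivity)]
              have e3 : (1 - p) ^ (k - m) ≤ Real.exp (-(p * (k - m : ℕ))) := by
                have hle : 1 - p ≤ Real.exp (-p) := by
                  have := Real.add_one_le_exp (-p); linarith
                calc (1 - p) ^ (k - m) ≤ Real.exp (-p) ^ (k - m) :=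
                      pow_le_pow_left₀ h1p0 hle _
                  _ = Real.exp (-(p * (k - m : ℕ))) := by
                      rw [← Real.exp_nat_mul]; ring_nf
              calc (m : ℝ) * ((k : ℝ) ^ m * (1 - p) ^ (k - m))
                  ≤ Real.exp (Real.log m) * (Real.exp (m * Real.log k) *
                      Real.exp (-(p * (k - m : ℕ)))) := by
                    rw [← e1, ← e2]
                    apply mul_le_mul_of_nonneg_left _ hmpos.le
                    exact mul_le_mul_of_nonneg_left e3 (by positivity)
                _ = Real.exp (Real.log m + m * Real.log k - p * (k - m : ℕ)) := by
                    rw [← Real.exp_add, ← Real.exp_add]; ring_nf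
                _ ≤ Real.exp (-t) := by
                    apply Real.exp_le_exp.mpr
                    -- final arithmetic
                    have hlogm : Real.log m ≤ (m : ℝ) := by
                      have := Real.log_le_sub_one_of_pos hmpos; linarith
                    have hlogk : 0 ≤ Real.log k := Real.log_nonneg hkR1
                    have hpk : c * (k : ℝ) ^ (-(11:ℝ)/12) * ((k:ℝ)/2) ≤ p * (k - m : ℕ) := by
                      apply mul_le_mul hppos hkm (by positivity) hp0
                    have hmul : (k:ℝ) ^ (-(11:ℝ)/12) * (k:ℝ) ^ (1:ℝ) = (k:ℝ) ^ ((1:ℝ)/12) := by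
                      rw [← Real.rpow_add hkpos]; norm_num
                    rw [Real.rpow_one] at hmul
                    have hrid : c * (k : ℝ) ^ (-(11:ℝ)/12) * ((k:ℝ)/2)
                        = (c/2) * (k:ℝ) ^ ((1:ℝ)/12) := by
                      calc c * (k : ℝ) ^ (-(11:ℝ)/12) * ((k:ℝ)/2)
                          = (c/2) * ((k:ℝ) ^ (-(11:ℝ)/12) * (k:ℝ)) := by ring
                        _ = (c/2) * (k:ℝ) ^ ((1:ℝ)/12) := by rw [hmul]
                    have ht2 : t * t = (k:ℝ) ^ ((1:ℝ)/12) := by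
                      rw [ht, ← Real.rpow_add hkpos]; norm_num
                    have hpk2 : (c/2) * (t * t) ≤ p * ((k - m : ℕ) : ℝ) := by
                      rw [ht2, ← hrid]; exact hpk
                    have hmlogk : (m:ℝ) * Real.log k ≤ 2 * t * Real.log k :=
                      mul_le_mul_of_nonneg_right hmR hlogk
                    have h5' : 3 * t + 2 * (t * Real.log k) ≤ (c/2) * (t * t) := by
                      nlinarith [hk5, htpos.le]
                    linarith [hlogm, hmR, hmlogk, h5', hpk2]
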